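/- For every n ≥ 2, the restriction of the angle-doubling map d to the open hemisphere {x ∈ S^n : x_{n+1} = 0 and x_n > 0} is a bijection onto S^{n−1} \ {(0, …, 0, −1)}. -/

import Mathlib

/-- The angle-doubling map `d : ℝ^{n+1} → ℝ^n`,
`d(x_1, …, x_{n+1}) = (2x_n x_1, …, 2x_n x_{n−1}, 2x_n² − 1)`
(here coordinates `x_1, …, x_{n+1}` correspond to indices `0, …, n`). -/
noncomputable def doubling (n : ℕ) (x : EuclideanSpace ℝ (Fin (n + 1))) :
    EuclideanSpace ℝ (Fin n) := WithLp.toLp 2 (fun j =>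
  if (j : ℕ) < n - 1 then 2 * x ⟨n - 1, by omega⟩ * x (Fin.castSucc j)
  else 2 * (x ⟨n - 1, by omega⟩) ^ 2 - 1)

/-- The point `(0, …, 0, −1) ∈ S^{n−1} ⊂ ℝ^n`. -/
def southPole (n : ℕ) : EuclideanSpace ℝ (Fin n) := WithLp.toLp 2 (fun j =>
  if (j : ℕ) = n - 1 then -1 else 0)

/-! On the hemisphere write `x = (u, a, 0)` with `a > 0` and `‖u‖² + a² = 1`, so that
`d x = (2a u, 2a² - 1)`; it lies on the sphere since `4a²(1 - a²) + (2a² - 1)² = 1`.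
Conversely the last coordinate `c = 2a² - 1` of `y = (v, c)` recovers `a = √((1 + c) / 2)`
because `a > 0`, and then `u = v / (2a)`: this inverse exists exactly when `c ≠ -1`, and on the
sphere `c = -1` only at the south pole. -/

open Real

theorem EuclideanSpace.norm_eq_one_iff_sum_sq {ι : Type*} [Fintype ι] {x : EuclideanSpace ℝ ι} :
    ‖x‖ = 1 ↔ ∑ i, x i ^ 2 = 1 := by
  rw [← EuclideanSpace.real_norm_sq_eq, pow_eq_one_iff_of_nonneg (norm_nonneg x) two_ne_zero]

theorem EuclideanSpace.neg_one_lt_apply_of_norm_eq_one {ι : Type*} [Fintype ι] [DecidableEq ι]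
    {y : EuclideanSpace ℝ ι} (hy : ‖y‖ = 1) {i : ι} (hne : y ≠ -EuclideanSpace.single i 1) :
    -1 < y i := by
  have he : ‖EuclideanSpace.single i (1 : ℝ)‖ = 1 := by simp
  have hi : inner ℝ y (EuclideanSpace.single i 1) = y i := by
    simp [EuclideanSpace.inner_single_right]
  rw [← hi]
  exact (neg_one_le_real_inner_of_norm_eq_one hy he).lt_of_ne'
    fun h => hne ((inner_eq_neg_one_iff_of_norm_eq_one hy he).1 h)

theorem southPole_succ (m : ℕ) : southPole (m + 1) = -EuclideanSpace.single (Fin.last m) 1 := by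
  ext j
  simp [southPole, Fin.ext_iff, eq_comm, apply_ite]

/-- If `c = cos θ` with `0 ≤ θ ≤ π`, then `halfAngleCos c = cos (θ / 2)`. -/
noncomputable def halfAngleCos (c : ℝ) : ℝ := √((1 + c) / 2)

theorem halfAngleCos_pos {c : ℝ} (hc : -1 < c) : 0 < halfAngleCos c :=
  sqrt_pos.2 (by linarith)

theorem halfAngleCos_sq {c : ℝ} (hc : -1 ≤ c) : halfAngleCos c ^ 2 = (1 + c) / 2 :=
  sq_sqrt (by linarith)

theorem halfAngleCos_two_mul_sq_sub_one {a : ℝ} (ha : 0 ≤ a) :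
    halfAngleCos (2 * a ^ 2 - 1) = a := by
  rw [halfAngleCos, show (1 + (2 * a ^ 2 - 1)) / 2 = a ^ 2 by ring, sqrt_sq ha]

noncomputable def doublingInv (m : ℕ) (y : EuclideanSpace ℝ (Fin (m + 1))) :
    EuclideanSpace ℝ (Fin (m + 2)) :=
  let a := halfAngleCos (y (Fin.last m))
  WithLp.toLp 2 (Fin.snoc (Fin.snoc (fun i => y i.castSucc / (2 * a)) a) 0)

section

variable {m : ℕ}

theorem doubling_apply_castSucc (x : EuclideanSpace ℝ (Fin (m + 2))) (i : Fin m) :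
    doubling (m + 1) x i.castSucc = 2 * x (Fin.last m).castSucc * x i.castSucc.castSucc := by
  rw [doubling, WithLp.ofLp_toLp, if_pos (by simp)]
  rfl

theorem doubling_apply_last (x : EuclideanSpace ℝ (Fin (m + 2))) :
    doubling (m + 1) x (Fin.last m) = 2 * x (Fin.last m).castSucc ^ 2 - 1 := by
  rw [doubling, WithLp.ofLp_toLp, if_neg (by simp)]
  rfl

theorem norm_doubling {x : EuclideanSpace ℝ (Fin (m + 2))} (hx : ‖x‖ = 1)
    (hlast : x (Fin.last (m + 1)) = 0) : ‖doubling (m + 1) x‖ = 1 := by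
  set a := x (Fin.last m).castSucc
  rw [EuclideanSpace.norm_eq_one_iff_sum_sq, Fin.sum_univ_castSucc, Fin.sum_univ_castSucc,
    hlast] at hx
  have hrest : ∑ i : Fin m, x i.castSucc.castSucc ^ 2 = 1 - a ^ 2 := by linarith
  rw [EuclideanSpace.norm_eq_one_iff_sum_sq, Fin.sum_univ_castSucc]
  simp only [doubling_apply_castSucc, doubling_apply_last, mul_pow, ← Finset.mul_sum, hrest]
  ring

theorem doubling_ne_southPole {x : EuclideanSpace ℝ (Fin (m + 2))}
    (hx : x (Fin.last m).castSucc ≠ 0) : doubling (m + 1) x ≠ southPole (m + 1) := by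
  intro h
  have hlast := congrArg (· (Fin.last m)) h
  simp [doubling_apply_last, southPole_succ] at hlast
  exact hx hlast

@[simp]
theorem doublingInv_apply_castSucc_castSucc (y : EuclideanSpace ℝ (Fin (m + 1)))
    (i : Fin m) :
    doublingInv m y i.castSucc.castSucc = y i.castSucc / (2 * halfAngleCos (y (Fin.last m))) := by
  simp [doublingInv]

@[simp]
theorem doublingInv_apply_castSucc_last (y : EuclideanSpace ℝ (Fin (m + 1))) :
    doublingInv m y (Fin.last m).castSucc = halfAngleCos (y (Fin.last m)) := by
  simp [doublingInv]

@[simp]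
theorem doublingInv_apply_last (y : EuclideanSpace ℝ (Fin (m + 1))) :
    doublingInv m y (Fin.last (m + 1)) = 0 := by
  simp [doublingInv]

theorem doublingInv_doubling {x : EuclideanSpace ℝ (Fin (m + 2))}
    (hlast : x (Fin.last (m + 1)) = 0) (hpos : 0 < x (Fin.last m).castSucc) :
    doublingInv m (doubling (m + 1) x) = x := by
  ext j
  refine Fin.lastCases ?_ (Fin.lastCases ?_ fun i => ?_) j
  · simp [hlast]
  · simp [doubling_apply_last, halfAngleCos_two_mul_sq_sub_one hpos.le]
  · simp only [doublingInv_apply_castSucc_castSucc, doubling_apply_castSucc, doubling_apply_last,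
      halfAngleCos_two_mul_sq_sub_one hpos.le]
    field_simp

theorem doubling_doublingInv {y : EuclideanSpace ℝ (Fin (m + 1))} (hc : -1 < y (Fin.last m)) :
    doubling (m + 1) (doublingInv m y) = y := by
  have ha := halfAngleCos_pos hc
  ext j
  refine Fin.lastCases ?_ (fun i => ?_) j
  · rw [doubling_apply_last, doublingInv_apply_castSucc_last, halfAngleCos_sq hc.le]
    ring
  · rw [doubling_apply_castSucc, doublingInv_apply_castSucc_last,
      doublingInv_apply_castSucc_castSucc]
    field_simp

theorem norm_doublingInv {y : EuclideanSpace ℝ (Fin (m + 1))} (hy : ‖y‖ = 1)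
    (hc : -1 < y (Fin.last m)) : ‖doublingInv m y‖ = 1 := by
  rw [EuclideanSpace.norm_eq_one_iff_sum_sq, Fin.sum_univ_castSucc] at hy
  have hrest : ∑ i : Fin m, y i.castSucc ^ 2 = (1 - y (Fin.last m)) * (1 + y (Fin.last m)) := by
    linarith
  have hc' : 1 + y (Fin.last m) ≠ 0 := by linarith
  rw [EuclideanSpace.norm_eq_one_iff_sum_sq, Fin.sum_univ_castSucc, Fin.sum_univ_castSucc]
  simp only [doublingInv_apply_castSucc_castSucc, doublingInv_apply_castSucc_last,
    doublingInv_apply_last, div_pow, ← Finset.sum_div, hrest, mul_pow, halfAngleCos_sq hc.le]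
  field_simp
  ring

end

theorem bijOn_doubling_succ (m : ℕ) :
    Set.BijOn (doubling (m + 1))
      {x | x ∈ Metric.sphere 0 1 ∧ x (Fin.last (m + 1)) = 0 ∧ 0 < x (Fin.last m).castSucc}
      (Metric.sphere 0 1 \ {southPole (m + 1)}) := by
  have hc {y : EuclideanSpace ℝ (Fin (m + 1))}
      (hy : y ∈ Metric.sphere 0 1 \ {southPole (m + 1)}) :
      -1 < y (Fin.last m) :=
    EuclideanSpace.neg_one_lt_apply_of_norm_eq_one (mem_sphere_zero_iff_norm.1 hy.1)
      (southPole_succ m ▸ hy.2)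
  refine Set.InvOn.bijOn (f' := doublingInv m) ⟨?_, ?_⟩ ?_ ?_
  · exact fun x ⟨_, hlast, hpos⟩ => doublingInv_doubling hlast hpos
  · exact fun y hy => doubling_doublingInv (hc hy)
  · rintro x ⟨hx, hlast, hpos⟩
    exact ⟨mem_sphere_zero_iff_norm.2 (norm_doubling (mem_sphere_zero_iff_norm.1 hx) hlast),
      doubling_ne_southPole hpos.ne'⟩
  · intro y hy
    refine ⟨?_, doublingInv_apply_last y, by simpa using halfAngleCos_pos (hc hy)⟩
    exact mem_sphere_zero_iff_norm.2 (norm_doublingInv (mem_sphere_zero_iff_norm.1 hy.1) (hc hy))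

theorem doubling_bijOn_openHemisphere (n : ℕ) :
    Set.BijOn (doubling n)
      {x | x ∈ Metric.sphere (0 : EuclideanSpace ℝ (Fin (n + 1))) 1 ∧
        x ⟨n, by omega⟩ = 0 ∧ 0 < x ⟨n - 1, by omega⟩}
      (Metric.sphere (0 : EuclideanSpace ℝ (Fin n)) 1 \ {southPole n}) := by
  cases n with
  | zero =>
    have hs : {x | x ∈ Metric.sphere (0 : EuclideanSpace ℝ (Fin 1)) 1 ∧
        x ⟨0, by omega⟩ = 0 ∧ 0 < x ⟨0 - 1, by omega⟩} = ∅ :=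
      Set.eq_empty_of_forall_notMem fun x ⟨_, h0, hpos⟩ => hpos.ne' h0
    rw [hs, Metric.sphere_eq_empty_of_subsingleton one_ne_zero, Set.empty_sdiff]
    exact Set.bijOn_empty _
  | succ m => exact bijOn_doubling_succ m
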